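/- For every integer n ≥ 2, one has ∑_{k=1}^{n} 1/(k²(n+1−k)²) < 14/(n+1)². -/
import Mathlib


open Finset

/-- for every integer `n ≥ 2`,
`∑_{k=1}^{n} 1/(k²(n+1−k)²) < 14/(n+1)²`. -/
theorem catalan_type_sum_bound (n : ℕ) (hn : 2 ≤ n) :
    ∑ k ∈ Finset.Icc 1 n, (1 : ℝ) / ((k : ℝ) ^ 2 * ((n + 1 - k : ℕ) : ℝ) ^ 2)
      < 14 / ((n : ℝ) + 1) ^ 2 := by
  have hm : (0:ℝ) < (n:ℝ) + 1 := by positivity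
  -- Step 1: pointwise bound
  have step1 : ∑ k ∈ Finset.Icc 1 n, (1 : ℝ) / ((k : ℝ) ^ 2 * ((n + 1 - k : ℕ) : ℝ) ^ 2)
      ≤ ∑ k ∈ Finset.Icc 1 n,
        (2 / ((n:ℝ)+1)^2) * (1/(k:ℝ)^2 + 1/(((n + 1 - k : ℕ)):ℝ)^2) := by
    apply Finset.sum_le_sum
    intro k hk
    simp only [Finset.mem_Icc] at hk
    set a : ℝ := (k : ℝ) with ha
    set b : ℝ := ((n + 1 - k : ℕ) : ℝ) with hb
    have ha1 : (1:ℝ) ≤ a := by rw [ha]; exact_mod_cast hk.1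
    have hb1 : (1:ℝ) ≤ b := by
      rw [hb]
      have : 1 ≤ n + 1 - k := by omega
      exact_mod_cast this
    have hab : a + b = (n:ℝ) + 1 := by
      rw [ha, hb]
      have : (n + 1 - k : ℕ) = n + 1 - k := rfl
      have hk' : k ≤ n + 1 := by omega
      push_cast [Nat.cast_sub hk']
      ring
    have ha0 : (0:ℝ) < a := by linarith
    have hb0 : (0:ℝ) < b := by linarith
    rw [div_le_iff₀ (by positivity), ← hab]
    have h1 : 2 / (a+b)^2 * (1/a^2 + 1/b^2) * (a^2 * b^2)
        = 2 * (a^2 + b^2) / (a+b)^2 := by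
      field_simp
      ring
    rw [h1, le_div_iff₀ (by positivity)]
    nlinarith [sq_nonneg (a - b)]
  -- Step 2: reflection
  have refl : ∑ k ∈ Finset.Icc 1 n, (1:ℝ)/(((n + 1 - k : ℕ)):ℝ)^2
      = ∑ k ∈ Finset.Icc 1 n, (1:ℝ)/(k:ℝ)^2 := by
    apply Finset.sum_nbij' (fun k => n + 1 - k) (fun k => n + 1 - k)
    · intro a ha; simp only [Finset.mem_Icc] at ha ⊢; omega
    · intro a ha; simp only [Finset.mem_Icc] at ha ⊢; omega
    · intro a ha; simp only [Finset.mem_Icc] at ha; omega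
    · intro a ha; simp only [Finset.mem_Icc] at ha; omega
    · intro a _; rfl
  -- Step 3: Basel-type bound
  have basel : ∑ k ∈ Finset.Icc 1 n, (1:ℝ)/(k:ℝ)^2 ≤ 2 := by
    have h := sum_Ioo_inv_sq_le (α := ℝ) 0 (n+1)
    simp only [Nat.cast_zero, zero_add, div_one] at h
    have he : Finset.Icc 1 n = Finset.Ioo 0 (n+1) := by
      ext x; simp [Nat.lt_succ_iff]; omega
    rw [he]
    calc ∑ k ∈ Finset.Ioo 0 (n+1), (1:ℝ)/(k:ℝ)^2
        = ∑ k ∈ Finset.Ioo 0 (n+1), ((k:ℝ)^2)⁻¹ := by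
          apply Finset.sum_congr rfl; intro x _; rw [one_div]
      _ ≤ 2 := by exact_mod_cast h
  calc ∑ k ∈ Finset.Icc 1 n, (1 : ℝ) / ((k : ℝ) ^ 2 * ((n + 1 - k : ℕ) : ℝ) ^ 2)
      ≤ ∑ k ∈ Finset.Icc 1 n,
        (2 / ((n:ℝ)+1)^2) * (1/(k:ℝ)^2 + 1/(((n + 1 - k : ℕ)):ℝ)^2) := step1
    _ = (2 / ((n:ℝ)+1)^2) * (∑ k ∈ Finset.Icc 1 n, (1/(k:ℝ)^2)
          + ∑ k ∈ Finset.Icc 1 n, (1:ℝ)/(((n + 1 - k : ℕ)):ℝ)^2) := by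
        rw [← Finset.mul_sum, Finset.sum_add_distrib]
    _ = (2 / ((n:ℝ)+1)^2) * (2 * ∑ k ∈ Finset.Icc 1 n, (1/(k:ℝ)^2)) := by
        rw [refl]; ring
    _ ≤ (2 / ((n:ℝ)+1)^2) * (2 * 2) := by
        apply mul_le_mul_of_nonneg_left _ (by positivity)
        linarith
    _ < 14 / ((n:ℝ)+1)^2 := by
        rw [div_mul_eq_mul_div, div_lt_div_iff₀ (by positivity) (by positivity)]
        nlinarith
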